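/- arXiv:1801.08405 — 3 statements merged into one kernel-verified Lean document; each statement's English description precedes it below -/
import Mathlib

section
/- If a closed curve of length 1 lies in the horizontal strip 0 ≤ y ≤ w with w = √(1/4 − 1/π²) and touches both lines y = 0 and y = w, then the projection of the curve onto the x-axis has length at most 1/π. -/
open Real Set

set_option maxHeartbeats 1000000

private lemma tele_abs' (g : ℕ → ℝ) {i j : ℕ} (h : i ≤ j) :
    |g j - g i| ≤ ∑ k ∈ Finset.Ico i j, |g (k+1) - g k| := by
  induction j, h using Nat.le_induction with
  | base => simp
  | succ n hn ih =>
      rw [Finset.sum_Ico_succ_top (by omega)]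
      have h1 := abs_sub_le (g (n+1)) (g n) (g i)
      linarith


private lemma loop_abs' (g : ℕ → ℝ) {n i j : ℕ} (hg : g 0 = g n) (hi : i ≤ n) (hj : j ≤ n) :
    2 * |g i - g j| ≤ ∑ k ∈ Finset.range n, |g (k+1) - g k| := by
  have key : ∀ i j : ℕ, i ≤ j → j ≤ n →
      2 * |g i - g j| ≤ ∑ k ∈ Finset.range n, |g (k+1) - g k| := by
    intro i j hij hjn
    have hin : i ≤ n := hij.trans hjn
    rw [Finset.range_eq_Ico, ← Finset.sum_Ico_consecutive _ (Nat.zero_le i) hin,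
      ← Finset.sum_Ico_consecutive _ hij hjn]
    have t1 := tele_abs' g (Nat.zero_le i)
    have t2 := tele_abs' g hij
    have t3 := tele_abs' g hjn
    have tri : |g i - g j| ≤ |g i - g n| + |g n - g j| := abs_sub_le _ _ _
    have e1 : |g i - g 0| = |g i - g n| := by rw [hg]
    have e2 : |g j - g i| = |g i - g j| := abs_sub_comm _ _
    rw [e1] at t1
    rw [e2] at t2
    have e5 : |g i - g n| = |g n - g i| := abs_sub_comm _ _
    rw [e5] at t1
    rw [e5] at tri
    linarith
  rcases le_total i j with h | h
  · exact key i j h hj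
  · rw [abs_sub_comm]; exact key j i h hi

private lemma mink_sum' (n : ℕ) (A B : ℕ → ℝ) :
    Real.sqrt ((∑ k ∈ Finset.range n, |A k|)^2 + (∑ k ∈ Finset.range n, |B k|)^2)
      ≤ ∑ k ∈ Finset.range n, Real.sqrt ((A k)^2 + (B k)^2) := by
  set z : ℕ → ℂ := fun k => ⟨|A k|, |B k|⟩ with hz
  have hnorm : ∀ k, Real.sqrt ((A k)^2 + (B k)^2) = ‖z k‖ := by
    intro k
    rw [Complex.norm_def, Complex.normSq_mk,
      abs_mul_abs_self, abs_mul_abs_self]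
    ring_nf
  have hre : (∑ k ∈ Finset.range n, z k).re = ∑ k ∈ Finset.range n, |A k| := by
    rw [Complex.re_sum]
  have him : (∑ k ∈ Finset.range n, z k).im = ∑ k ∈ Finset.range n, |B k| := by
    rw [Complex.im_sum]
  have hL : Real.sqrt ((∑ k ∈ Finset.range n, |A k|)^2 + (∑ k ∈ Finset.range n, |B k|)^2)
      = ‖∑ k ∈ Finset.range n, z k‖ := by
    rw [Complex.norm_def, Complex.normSq_apply, hre, him]
    ring_nf
  rw [hL]
  calc ‖∑ k ∈ Finset.range n, z k‖ ≤ ∑ k ∈ Finset.range n, ‖z k‖ := norm_sum_le _ _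
    _ = ∑ k ∈ Finset.range n, Real.sqrt ((A k)^2 + (B k)^2) :=
        Finset.sum_congr rfl fun k _ => (hnorm k).symm

private lemma main_aux (γ : ℝ → EuclideanSpace ℝ (Fin 2)) (hclosed : γ 0 = γ 1)
    (hlen : eVariationOn γ (Icc 0 1) = 1)
    (w : ℝ) (hw : w = Real.sqrt (1 / 4 - 1 / π ^ 2))
    (n : ℕ) (u : ℕ → ℝ) (hu : Monotone u) (hmem : ∀ k, u k ∈ Icc (0:ℝ) 1)
    (hu0 : u 0 = 0) (hun : u n = 1)
    (i j a b : ℕ) (hi : i ≤ n) (hj : j ≤ n) (ha : a ≤ n) (hb : b ≤ n)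
    (hya : (γ (u a)) 1 = 0) (hyb : (γ (u b)) 1 = w) :
    (γ (u i)) 0 - (γ (u j)) 0 ≤ 1 / π := by
  have hpi := Real.pi_gt_three
  set X : ℕ → ℝ := fun k => (γ (u k)) 0 with hX
  set Y : ℕ → ℝ := fun k => (γ (u k)) 1 with hY
  set d : ℝ := X i - X j with hd
  by_cases hd0 : d ≤ 0
  · have : (0:ℝ) < 1 / π := by positivity
    linarith
  push_neg at hd0
  have h9 : (9:ℝ) < π ^ 2 := by nlinarith
  have hwsq0 : (0:ℝ) ≤ 1 / 4 - 1 / π ^ 2 := by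
    have : 1 / π ^ 2 < 1 / 9 := by
      apply one_div_lt_one_div_of_lt <;> norm_num
      exact h9
    linarith
  have hw0 : 0 ≤ w := hw ▸ Real.sqrt_nonneg _
  have hwsq : w ^ 2 = 1 / 4 - 1 / π ^ 2 := by rw [hw, Real.sq_sqrt hwsq0]
  have hloopeq : γ (u 0) = γ (u n) := by rw [hu0, hun, hclosed]
  have hX0 : X 0 = X n := congrArg (fun p => p 0) hloopeq
  have hY0 : Y 0 = Y n := congrArg (fun p => p 1) hloopeq
  -- the polygonal length bound
  have h1 : ∑ k ∈ Finset.range n, edist (γ (u (k+1))) (γ (u k)) ≤ 1 :=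
    hlen ▸ eVariationOn.sum_le (f := γ) (n := n) hu hmem
  have h2 : ∑ k ∈ Finset.range n, dist (γ (u (k+1))) (γ (u k)) ≤ 1 := by
    apply ENNReal.ofReal_le_one.mp
    calc ENNReal.ofReal (∑ k ∈ Finset.range n, dist (γ (u (k+1))) (γ (u k)))
        = ∑ k ∈ Finset.range n, ENNReal.ofReal (dist (γ (u (k+1))) (γ (u k))) :=
          ENNReal.ofReal_sum_of_nonneg (fun k _ => dist_nonneg)
      _ = ∑ k ∈ Finset.range n, edist (γ (u (k+1))) (γ (u k)) :=
          Finset.sum_congr rfl fun k _ => (edist_dist _ _).symm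
      _ ≤ 1 := h1
  have hdist : ∀ k, dist (γ (u (k+1))) (γ (u k))
      = Real.sqrt ((X (k+1) - X k)^2 + (Y (k+1) - Y k)^2) := by
    intro k
    rw [EuclideanSpace.dist_eq, Fin.sum_univ_two]
    congr 1
    rw [Real.dist_eq, Real.dist_eq, sq_abs, sq_abs]
  have hXb : 2 * d ≤ ∑ k ∈ Finset.range n, |X (k+1) - X k| := by
    have hl := loop_abs' X hX0 hi hj
    have hd' : d ≤ |X i - X j| := hd ▸ le_abs_self _
    linarith
  have hYb : 2 * w ≤ ∑ k ∈ Finset.range n, |Y (k+1) - Y k| := by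
    have hl := loop_abs' Y hY0 hb ha
    have : |Y b - Y a| = w := by
      show |γ (u b) 1 - γ (u a) 1| = w
      rw [hya, hyb, sub_zero, abs_of_nonneg hw0]
    linarith
  set SA := ∑ k ∈ Finset.range n, |X (k+1) - X k| with hSA
  set SB := ∑ k ∈ Finset.range n, |Y (k+1) - Y k| with hSB
  have hSA0 : 0 ≤ SA := Finset.sum_nonneg fun k _ => abs_nonneg _
  have hSB0 : 0 ≤ SB := Finset.sum_nonneg fun k _ => abs_nonneg _
  have hmink : Real.sqrt (SA^2 + SB^2) ≤ 1 := by
    refine le_trans (mink_sum' n _ _) ?_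
    calc ∑ k ∈ Finset.range n, Real.sqrt ((X (k+1) - X k)^2 + (Y (k+1) - Y k)^2)
        = ∑ k ∈ Finset.range n, dist (γ (u (k+1))) (γ (u k)) :=
          Finset.sum_congr rfl fun k _ => (hdist k).symm
      _ ≤ 1 := h2
  have hstep : Real.sqrt (4*d^2 + 4*w^2) ≤ 1 := by
    refine le_trans (Real.sqrt_le_sqrt ?_) hmink
    nlinarith
  have hsq : 4*d^2 + 4*w^2 ≤ 1 := by
    have hnn : (0:ℝ) ≤ 4*d^2 + 4*w^2 := by positivity
    nlinarith [Real.sq_sqrt hnn, Real.sqrt_nonneg (4*d^2 + 4*w^2)]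
  have hdsq : d^2 ≤ (1/π)^2 := by
    rw [hwsq] at hsq
    rw [div_pow, one_pow]
    linarith
  have h1pi : (0:ℝ) < 1/π := by positivity
  calc d ≤ |d| := le_abs_self d
    _ = Real.sqrt (d^2) := (Real.sqrt_sq_eq_abs d).symm
    _ ≤ Real.sqrt ((1/π)^2) := Real.sqrt_le_sqrt hdsq
    _ = 1/π := Real.sqrt_sq h1pi.le

/-- If a closed curve of length 1 lies in the horizontal strip `0 ≤ y ≤ w`
with `w = √(1/4 − 1/π²)` and touches both boundary lines, then its horizontal
extent is at most `1/π`. -/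
theorem closed_unit_curve_in_strip_horizontal_extent
    (γ : ℝ → EuclideanSpace ℝ (Fin 2))
    (hcont : ContinuousOn γ (Icc 0 1))
    (hclosed : γ 0 = γ 1)
    (hlen : eVariationOn γ (Icc 0 1) = 1)
    (w : ℝ) (hw : w = Real.sqrt (1 / 4 - 1 / π ^ 2))
    (hstrip : ∀ p ∈ γ '' Icc 0 1, 0 ≤ p 1 ∧ p 1 ≤ w)
    (h0 : ∃ p ∈ γ '' Icc 0 1, p 1 = 0)
    (hw' : ∃ p ∈ γ '' Icc 0 1, p 1 = w) :
    ∀ p ∈ γ '' Icc 0 1, ∀ q ∈ γ '' Icc 0 1, p 0 - q 0 ≤ 1 / π := by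
  classical
  rintro p ⟨s, hs, rfl⟩ q ⟨t, ht, rfl⟩
  obtain ⟨_, ⟨a, ha, rfl⟩, hya⟩ := h0
  obtain ⟨_, ⟨b, hb, rfl⟩, hyb⟩ := hw'
  set S : Finset ℝ := {0, 1, s, t, a, b} with hS
  have hSsub : ∀ x ∈ S, x ∈ Icc (0:ℝ) 1 := by
    intro x hx
    simp only [hS, Finset.mem_insert, Finset.mem_singleton] at hx
    rcases hx with rfl | rfl | rfl | rfl | rfl | rfl
    · exact ⟨le_refl 0, zero_le_one⟩
    · exact ⟨zero_le_one, le_refl 1⟩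
    · exact hs
    · exact ht
    · exact ha
    · exact hb
  have h0S : (0:ℝ) ∈ S := by simp [hS]
  have h1S : (1:ℝ) ∈ S := by simp [hS]
  have hsS : s ∈ S := by simp [hS]
  have htS : t ∈ S := by simp [hS]
  have haS : a ∈ S := by simp [hS]
  have hbS : b ∈ S := by simp [hS]
  set m := S.card with hm
  have hm0 : 0 < m := Finset.card_pos.mpr ⟨0, h0S⟩
  set e := S.orderIsoOfFin rfl with he
  set u : ℕ → ℝ := fun k => if h : k < m then (e ⟨k, h⟩ : ℝ) else 1 with hu
  have humem : ∀ k, u k ∈ Icc (0:ℝ) 1 := by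
    intro k
    by_cases h : k < m
    · simp only [hu]
      rw [dif_pos h]
      exact hSsub _ (e ⟨k, h⟩).2
    · simp only [hu]
      rw [dif_neg h]
      exact ⟨zero_le_one, le_refl 1⟩
  have humono : Monotone u := by
    intro k l hkl
    by_cases hl : l < m
    · have hk : k < m := lt_of_le_of_lt hkl hl
      simp only [hu]
      rw [dif_pos hk, dif_pos hl]
      exact_mod_cast e.monotone (show (⟨k, hk⟩ : Fin m) ≤ ⟨l, hl⟩ from hkl)
    · by_cases hk : k < m
      · simp only [hu]
        rw [dif_pos hk, dif_neg hl]
        exact (hSsub _ (e ⟨k, hk⟩).2).2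
      · simp only [hu]
        rw [dif_neg hk, dif_neg hl]
  have hidx : ∀ x, ∀ hx : x ∈ S, ∃ k, k ≤ m - 1 ∧ u k = x := by
    intro x hx
    refine ⟨(e.symm ⟨x, hx⟩ : Fin m).val, Nat.le_pred_of_lt (e.symm ⟨x, hx⟩).isLt, ?_⟩
    simp only [hu]
    rw [dif_pos (e.symm ⟨x, hx⟩).isLt]
    have : (⟨(e.symm ⟨x, hx⟩ : Fin m).val, (e.symm ⟨x, hx⟩).isLt⟩ : Fin m)
        = e.symm ⟨x, hx⟩ := rfl
    rw [this, OrderIso.apply_symm_apply]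
  have hu0 : u 0 = 0 := by
    obtain ⟨k0, hk0le, hk0⟩ := hidx 0 h0S
    have hle : u 0 ≤ u k0 := humono (Nat.zero_le _)
    have hge : 0 ≤ u 0 := (humem 0).1
    rw [hk0] at hle
    linarith
  have hun : u (m - 1) = 1 := by
    obtain ⟨k1, hk1le, hk1⟩ := hidx 1 h1S
    have hle : u k1 ≤ u (m - 1) := humono hk1le
    rw [hk1] at hle
    exact le_antisymm (humem _).2 hle
  obtain ⟨ks, hks, hus⟩ := hidx s hsS
  obtain ⟨kt, hkt, hut⟩ := hidx t htS
  obtain ⟨ka, hka, hua⟩ := hidx a haS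
  obtain ⟨kb, hkb, hub⟩ := hidx b hbS
  have := main_aux γ hclosed hlen w hw (m - 1) u humono humem hu0 hun ks kt ka kb
    hks hkt hka hkb (by rw [hua]; exact hya) (by rw [hub]; exact hyb)
  rw [hus, hut] at this
  exact this
end

section
/- A closed curve of length 1 whose image contains two points at distance exactly 1/2 must be a doubled segment: its image equals the line segment between those two points. -/
open Real Set
open scoped ENNReal

lemma curve_aux (γ : ℝ → EuclideanSpace ℝ (Fin 2))
    (hcont : ContinuousOn γ (Icc 0 1))
    (hclosed : γ 0 = γ 1)
    (hlen : eVariationOn γ (Icc 0 1) = 1)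
    (a b : ℝ) (ha : a ∈ Icc (0:ℝ) 1) (hb : b ∈ Icc (0:ℝ) 1) (hab : a ≤ b)
    (hdist : dist (γ a) (γ b) = 1 / 2) :
    γ '' Icc 0 1 = segment ℝ (γ a) (γ b) := by
  obtain ⟨ha0, ha1⟩ := ha
  obtain ⟨hb0, hb1⟩ := hb
  set p := γ a with hpdef
  set q := γ b with hqdef
  -- splitting lemma for variations
  have split : ∀ u v w : ℝ, u ≤ v → v ≤ w →
      eVariationOn γ (Icc u v) + eVariationOn γ (Icc v w) = eVariationOn γ (Icc u w) := by
    intro u v w huv hvw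
    have h := eVariationOn.Icc_add_Icc γ (s := Icc u w) huv hvw ⟨huv, hvw⟩
    rw [Set.Icc_inter_Icc, Set.Icc_inter_Icc, Set.Icc_inter_Icc] at h
    simpa [max_eq_left huv, min_eq_right hvw,
      max_eq_right huv, min_eq_left hvw] using h
  set A := eVariationOn γ (Icc 0 a) with hA
  set B := eVariationOn γ (Icc a b) with hB
  set C := eVariationOn γ (Icc b 1) with hC
  have hsum : A + (B + C) = 1 := by
    rw [hB, hC, split a b 1 hab hb1, hA, split 0 a 1 ha0 ha1, hlen]
  have hedist : edist p q = 1/2 := by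
    rw [edist_dist, hdist]; norm_num [ENNReal.ofReal_div_of_pos]
  have hBge : (1/2 : ℝ≥0∞) ≤ B := by
    rw [← hedist]; exact eVariationOn.edist_le γ ⟨le_refl a, hab⟩ ⟨hab, le_refl b⟩
  have hACge : (1/2 : ℝ≥0∞) ≤ A + C := by
    rw [← hedist]
    calc edist p q ≤ edist p (γ 0) + edist (γ 0) q := edist_triangle _ _ _
      _ = edist (γ a) (γ 0) + edist (γ 1) (γ b) := by rw [hclosed]
      _ ≤ A + C := add_le_add
          (eVariationOn.edist_le γ ⟨ha0, le_refl a⟩ ⟨le_refl 0, ha0⟩)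
          (eVariationOn.edist_le γ ⟨hb1, le_refl 1⟩ ⟨le_refl b, hb1⟩)
  have hAne : A ≠ ⊤ := by
    refine ne_top_of_le_ne_top ENNReal.one_ne_top (hsum ▸ le_self_add)
  have hBne : B ≠ ⊤ := by
    refine ne_top_of_le_ne_top ENNReal.one_ne_top ?_
    calc B ≤ B + C := le_self_add
      _ ≤ A + (B + C) := le_add_self
      _ = 1 := hsum
  have hCne : C ≠ ⊤ := by
    refine ne_top_of_le_ne_top ENNReal.one_ne_top ?_
    calc C ≤ B + C := le_add_self
      _ ≤ A + (B + C) := le_add_self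
      _ = 1 := hsum
  have hACne : A + C ≠ ⊤ := ENNReal.add_ne_top.mpr ⟨hAne, hCne⟩
  have hBle : B ≤ 1/2 := by
    by_contra h
    push_neg at h
    have : (1:ℝ≥0∞) < 1 := by
      calc (1:ℝ≥0∞) = 1/2 + 1/2 := by rw [ENNReal.add_halves]
        _ ≤ (A + C) + 1/2 := add_le_add_left hACge _
        _ < (A + C) + B := ENNReal.add_lt_add_left hACne h
        _ = A + (B + C) := by ring
        _ = 1 := hsum
    exact lt_irrefl _ this
  have hACle : A + C ≤ 1/2 := by
    by_contra h
    push_neg at h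
    have : (1:ℝ≥0∞) < 1 := by
      calc (1:ℝ≥0∞) = 1/2 + 1/2 := by rw [ENNReal.add_halves]
        _ ≤ B + 1/2 := add_le_add_left hBge _
        _ < B + (A + C) := ENNReal.add_lt_add_left hBne h
        _ = A + (B + C) := by ring
        _ = 1 := hsum
    exact lt_irrefl _ this
  -- key: any point of the curve is on the segment
  have hsub : γ '' Icc 0 1 ⊆ segment ℝ p q := by
    rintro x ⟨t, ⟨ht0, ht1⟩, rfl⟩
    have key : edist p (γ t) + edist (γ t) q ≤ 1/2 := by
      rcases le_total t a with hta | hat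
      · -- t ≤ a : go around through the closing point
        calc edist p (γ t) + edist (γ t) q
            ≤ edist p (γ t) + (edist (γ t) (γ 0) + edist (γ 0) q) :=
              add_le_add_right (edist_triangle _ _ _) _
          _ = (edist (γ t) (γ 0) + edist p (γ t)) + edist (γ 1) q := by
              rw [hclosed]; ring
          _ ≤ (eVariationOn γ (Icc 0 t) + eVariationOn γ (Icc t a)) + C := by
              refine add_le_add (add_le_add ?_ ?_) ?_
              · exact eVariationOn.edist_le γ ⟨ht0, le_refl t⟩ ⟨le_refl 0, ht0⟩
              · exact eVariationOn.edist_le γ ⟨hta, le_refl a⟩ ⟨le_refl t, hta⟩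
              · exact eVariationOn.edist_le γ ⟨hb1, le_refl 1⟩ ⟨le_refl b, hb1⟩
          _ = A + C := by rw [split 0 t a ht0 hta]
          _ ≤ 1/2 := hACle
      · rcases le_total t b with htb | hbt
        · calc edist p (γ t) + edist (γ t) q
              ≤ eVariationOn γ (Icc a t) + eVariationOn γ (Icc t b) :=
                add_le_add
                  (eVariationOn.edist_le γ ⟨le_refl a, hat⟩ ⟨hat, le_refl t⟩)
                  (eVariationOn.edist_le γ ⟨le_refl t, htb⟩ ⟨htb, le_refl b⟩)
            _ = B := split a t b hat htb
            _ ≤ 1/2 := hBle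
        · -- b ≤ t
          calc edist p (γ t) + edist (γ t) q
              ≤ (edist p (γ 0) + edist (γ 0) (γ t)) + edist (γ t) q :=
                add_le_add_left (edist_triangle _ _ _) _
            _ = edist p (γ 0) + (edist (γ t) (γ 1) + edist q (γ t)) := by
                rw [hclosed, edist_comm (γ 1) (γ t), edist_comm (γ t) q]; ring
            _ ≤ A + (eVariationOn γ (Icc t 1) + eVariationOn γ (Icc b t)) := by
                refine add_le_add ?_ (add_le_add ?_ ?_)
                · exact eVariationOn.edist_le γ ⟨ha0, le_refl a⟩ ⟨le_refl 0, ha0⟩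
                · exact eVariationOn.edist_le γ ⟨le_refl t, ht1⟩ ⟨ht1, le_refl 1⟩
                · exact eVariationOn.edist_le γ ⟨le_refl b, hbt⟩ ⟨hbt, le_refl t⟩
            _ = A + C := by rw [add_comm (eVariationOn γ (Icc t 1)), split b t 1 hbt ht1]
            _ ≤ 1/2 := hACle
    -- convert to real and conclude
    have hreal : dist p (γ t) + dist (γ t) q ≤ 1/2 := by
      have h1 : (edist p (γ t) + edist (γ t) q).toReal ≤ ((1:ℝ≥0∞)/2).toReal :=
        ENNReal.toReal_mono (by norm_num) key
      have h2 : ((1:ℝ≥0∞)/2).toReal = 1/2 := by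
        rw [ENNReal.toReal_div]; norm_num
      rwa [ENNReal.toReal_add (edist_ne_top _ _) (edist_ne_top _ _),
        ← dist_edist, ← dist_edist, h2] at h1

    have heq : dist p (γ t) + dist (γ t) q = dist p q := by
      have := dist_triangle p (γ t) q
      rw [hdist] at *
      norm_num at hreal ⊢
      linarith
    exact mem_segment_iff_wbtw.mpr (dist_add_dist_eq_iff.mp heq)
  -- reverse inclusion
  refine Subset.antisymm hsub ?_
  have hpK : p ∈ γ '' Icc 0 1 := ⟨a, ⟨ha0, ha1⟩, rfl⟩
  have hqK : q ∈ γ '' Icc 0 1 := ⟨b, ⟨hb0, hb1⟩, rfl⟩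
  have hconn : IsPreconnected ((fun x => dist p x) '' (γ '' Icc 0 1)) :=
    ((isPreconnected_Icc.image γ hcont).image _
      (continuous_dist.comp (Continuous.prodMk_right p)).continuousOn)
  have hIcc : Icc (0:ℝ) (1/2) ⊆ (fun x => dist p x) '' (γ '' Icc 0 1) := by
    apply hconn.Icc_subset
    · exact ⟨p, hpK, dist_self p⟩
    · exact ⟨q, hqK, hdist⟩
  rintro z hz
  rw [segment_eq_image'] at hz
  obtain ⟨θ, ⟨hθ0, hθ1⟩, rfl⟩ := hz
  have hd : ∀ s : ℝ, 0 ≤ s → dist p (p + s • (q - p)) = s * (1/2) := by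
    intro s hs
    rw [dist_self_add_right, norm_smul, Real.norm_of_nonneg hs, ← dist_eq_norm', hdist]
  have : θ * (1/2) ∈ Icc (0:ℝ) (1/2) := by
    constructor <;> nlinarith
  obtain ⟨x, hxK, hx⟩ := hIcc this
  have hxseg := hsub hxK
  rw [segment_eq_image'] at hxseg
  obtain ⟨θ', ⟨hθ'0, hθ'1⟩, rfl⟩ := hxseg
  dsimp only at hx hxK ⊢
  rw [hd θ' hθ'0] at hx
  have : θ' = θ := by linarith
  rw [this] at hxK
  exact hxK

/-- A closed curve of length 1 whose image contains two points at distance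
exactly `1/2` is a doubled segment: its image is the segment between them. -/
theorem closed_unit_curve_with_diameter_half_is_segment
    (γ : ℝ → EuclideanSpace ℝ (Fin 2))
    (hcont : ContinuousOn γ (Icc 0 1))
    (hclosed : γ 0 = γ 1)
    (hlen : eVariationOn γ (Icc 0 1) = 1)
    (p q : EuclideanSpace ℝ (Fin 2))
    (hp : p ∈ γ '' Icc 0 1) (hq : q ∈ γ '' Icc 0 1)
    (hdist : dist p q = 1 / 2) :
    γ '' Icc 0 1 = segment ℝ p q := by
  obtain ⟨a, ha, rfl⟩ := hp
  obtain ⟨b, hb, rfl⟩ := hq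
  rcases le_total a b with hab | hba
  · exact curve_aux γ hcont hclosed hlen a b ha hb hab hdist
  · rw [segment_symm]
    exact curve_aux γ hcont hclosed hlen b a hb ha hba (by rw [dist_comm]; exact hdist)
end

section
/- The minimum area of the convex hull of (the union of) a circle of perimeter 1 and a line segment of length 1 in the plane, over all placements, is greater than 0.09632. -/
open Real Set MeasureTheory

lemma closedBall_subset_convexHull_sphere (c : EuclideanSpace ℝ (Fin 2)) (r : ℝ) (hr : 0 ≤ r) :
    Metric.closedBall c r ⊆ convexHull ℝ (Metric.sphere c r) := by
  intro y hy
  rw [Metric.mem_closedBall, dist_eq_norm] at hy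
  set z : EuclideanSpace ℝ (Fin 2) := y - c with hz
  obtain ⟨n, hn1, hn2⟩ : ∃ n : EuclideanSpace ℝ (Fin 2), ‖n‖ = 1 ∧ (inner ℝ z n : ℝ) = 0 := by
    by_cases h0 : z = 0
    · exact ⟨EuclideanSpace.single 0 1, by simp [EuclideanSpace.norm_single], by simp [h0]⟩
    · set n0 : EuclideanSpace ℝ (Fin 2) := !₂[-(z 1), z 0] with hn0
      refine ⟨‖z‖⁻¹ • n0, ?_, ?_⟩
      · have hnorm : ‖n0‖ = ‖z‖ := by
          rw [EuclideanSpace.norm_eq, EuclideanSpace.norm_eq]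
          simp [hn0, Fin.sum_univ_two]
          ring_nf
        rw [norm_smul, hnorm, norm_inv, norm_norm,
          inv_mul_cancel₀ (norm_ne_zero_iff.mpr h0)]
      · rw [real_inner_smul_right, PiLp.inner_apply]
        simp [hn0, Fin.sum_univ_two]
        ring_nf
        simp
  set s : ℝ := Real.sqrt (r ^ 2 - ‖z‖ ^ 2) with hs
  have hzr : ‖z‖ ^ 2 ≤ r ^ 2 := by nlinarith [norm_nonneg z]
  have hs2 : s ^ 2 = r ^ 2 - ‖z‖ ^ 2 := Real.sq_sqrt (by linarith)
  have hmem : ∀ t : ℝ, t ^ 2 = s ^ 2 → y + t • n ∈ Metric.sphere c r := by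
    intro t ht
    rw [Metric.mem_sphere, dist_eq_norm]
    have hre : y + t • n - c = z + t • n := by rw [hz]; abel
    rw [hre]
    have hsq : ‖z + t • n‖ ^ 2 = r ^ 2 := by
      rw [norm_add_sq_real, real_inner_smul_right, hn2, norm_smul]
      simp [hn1]
      nlinarith [hs2, ht]
    calc ‖z + t • n‖ = Real.sqrt (‖z + t • n‖ ^ 2) := (Real.sqrt_sq (norm_nonneg _)).symm
    _ = Real.sqrt (r ^ 2) := by rw [hsq]
    _ = r := Real.sqrt_sq hr
  have ha := hmem s rfl
  have hb := hmem (-s) (by ring)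
  have hy' : y = midpoint ℝ (y + s • n) (y + (-s) • n) := by
    rw [midpoint_eq_smul_add]
    match_scalars <;> simp [invOf_eq_inv] <;> ring
  rw [hy']
  exact (convex_convexHull ℝ _).segment_subset (subset_convexHull ℝ _ ha)
    (subset_convexHull ℝ _ hb) (midpoint_mem_segment _ _)

lemma exists_onb_pair (u w : EuclideanSpace ℝ (Fin 2)) (hu : ‖u‖ = 1) (hw : ‖w‖ = 1)
    (huw : (inner ℝ u w : ℝ) = 0) :
    ∃ b : OrthonormalBasis (Fin 2) ℝ (EuclideanSpace ℝ (Fin 2)), b 0 = u ∧ b 1 = w := by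
  have hsq : ∀ z : EuclideanSpace ℝ (Fin 2), ‖z‖ = 1 → z 0 * z 0 + z 1 * z 1 = 1 := by
    intro z hz
    have h := congrArg (· ^ 2) hz
    rw [EuclideanSpace.norm_eq] at h
    simp only [Fin.sum_univ_two, Real.norm_eq_abs, sq_abs, one_pow] at h
    rw [Real.sq_sqrt (by positivity)] at h
    nlinarith [h]
  set v : Fin 2 → EuclideanSpace ℝ (Fin 2) := ![u, w] with hvdef
  have hon : Orthonormal ℝ v := by
    rw [orthonormal_iff_ite]
    intro i j
    fin_cases i <;> fin_cases j <;>
      simp [hvdef, hu, hw, huw, hsq u hu, hsq w hw, real_inner_comm u w]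
  have hcard : Fintype.card (Fin 2) = Module.finrank ℝ (EuclideanSpace ℝ (Fin 2)) := by
    simp [finrank_euclideanSpace]
  set bas := basisOfLinearIndependentOfCardEqFinrank hon.linearIndependent hcard with hbasdef
  have hbas : ⇑bas = v := coe_basisOfLinearIndependentOfCardEqFinrank _ _
  refine ⟨bas.toOrthonormalBasis (by rwa [hbas]), ?_, ?_⟩ <;>
    · rw [Module.Basis.coe_toOrthonormalBasis, hbas]
      rfl

set_option maxHeartbeats 2000000 in
/-- For every placement in the plane of a circle of circumference 1 (radius
`1/(2π)`) and a segment of length 1, the area of the convex hull of their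
union exceeds `0.09632`. -/
theorem convexHull_circle_segment_area_gt
    (c p q : EuclideanSpace ℝ (Fin 2))
    (hpq : dist p q = 1) :
    ENNReal.ofReal 0.09632 <
      volume (convexHull ℝ (Metric.sphere c (1 / (2 * π)) ∪ segment ℝ p q)) := by
  set r : ℝ := 1 / (2 * π) with hrdef
  have hπ3 : (3.141592 : ℝ) < π := pi_gt_d6
  have hπ4 : π < 3.141593 := pi_lt_d6
  have hrpos : 0 < r := by positivity
  have hrhalf : r < 1 / 2 := by
    rw [hrdef, div_lt_div_iff₀ (by positivity) (by norm_num)]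
    nlinarith
  set K : Set (EuclideanSpace ℝ (Fin 2)) :=
    convexHull ℝ (Metric.sphere c r ∪ segment ℝ p q) with hKdef
  have hKconv : Convex ℝ K := convex_convexHull ℝ _
  have hsphereK : Metric.sphere c r ⊆ K :=
    (Set.subset_union_left).trans (subset_convexHull ℝ _)
  have hsegK : segment ℝ p q ⊆ K :=
    (Set.subset_union_right).trans (subset_convexHull ℝ _)
  have hballK : Metric.closedBall c r ⊆ K :=
    (closedBall_subset_convexHull_sphere c r hrpos.le).trans
      (convexHull_min hsphereK hKconv)
  have hcK : c ∈ K := hballK (Metric.mem_closedBall_self hrpos.le)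
  -- pick an endpoint far from c
  obtain ⟨x, hxK, hxd⟩ : ∃ x, x ∈ K ∧ 1 / 2 ≤ dist c x := by
    rcases le_or_gt (1 / 2) (dist c p) with h | h
    · exact ⟨p, hsegK (left_mem_segment ℝ p q), h⟩
    · refine ⟨q, hsegK (right_mem_segment ℝ p q), ?_⟩
      have ht := dist_triangle p c q
      rw [dist_comm p c] at ht
      linarith [hpq ▸ ht]
  set D : ℝ := dist c x with hDdef
  have hD0 : 0 < D := lt_of_lt_of_le (by norm_num) hxd
  have hxcn : ‖x - c‖ = D := by rw [hDdef, dist_comm, dist_eq_norm]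
  set u : EuclideanSpace ℝ (Fin 2) := D⁻¹ • (x - c) with hudef
  have hu : ‖u‖ = 1 := by
    rw [hudef, norm_smul, hxcn, norm_inv, Real.norm_eq_abs, abs_of_pos hD0,
      inv_mul_cancel₀ hD0.ne']
  set x' : EuclideanSpace ℝ (Fin 2) := c + (2⁻¹ : ℝ) • u with hx'def
  have hx'K : x' ∈ K := by
    have hseg : x' ∈ segment ℝ c x := by
      refine ⟨1 - (2 * D)⁻¹, (2 * D)⁻¹, ?_, by positivity, by ring, ?_⟩
      · have : (2 * D)⁻¹ ≤ 1 := by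
          rw [inv_le_one_iff₀]; right; linarith
        linarith
      · rw [hx'def, hudef, mul_inv]
        match_scalars <;> field_simp <;> ring
    exact hKconv.segment_subset hcK hxK hseg
  -- orthonormal basis (u, w)
  set w : EuclideanSpace ℝ (Fin 2) := !₂[-(u 1), u 0] with hwdef
  have hwn : ‖w‖ = 1 := by
    have hnorm : ‖w‖ = ‖u‖ := by
      rw [EuclideanSpace.norm_eq, EuclideanSpace.norm_eq]
      simp [hwdef, Fin.sum_univ_two]
      ring_nf
    rw [hnorm, hu]
  have huw : (inner ℝ u w : ℝ) = 0 := by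
    rw [PiLp.inner_apply]
    simp [hwdef, Fin.sum_univ_two]
    ring
  obtain ⟨b, hb0, hb1⟩ := exists_onb_pair u w hu hwn huw
  -- the rectangle
  set a : ℝ := r / 2 + 1 / 4 with hadef
  set e : ℝ := r * (1 / 2 - r) with hedef
  have hepos : 0 < e := by
    rw [hedef]; apply mul_pos hrpos; linarith
  set R : Set (EuclideanSpace ℝ (Fin 2)) :=
    {y | (inner ℝ u (y - c) : ℝ) ∈ Ioc r a ∧ (inner ℝ w (y - c) : ℝ) ∈ Icc (-e) e} with hRdef
  -- R is inside K
  have hAK : c + r • w ∈ K := by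
    apply hsphereK
    rw [Metric.mem_sphere, dist_self_add_left, norm_smul, hwn, Real.norm_eq_abs,
      abs_of_pos hrpos, mul_one]
  have hBK : c - r • w ∈ K := by
    apply hsphereK
    rw [Metric.mem_sphere, sub_eq_add_neg, ← neg_smul, dist_self_add_left, norm_smul, hwn,
      Real.norm_eq_abs, abs_neg, abs_of_pos hrpos, mul_one]
  have hRK : R ⊆ K := by
    rintro y ⟨⟨hα1, hα2⟩, hβ1, hβ2⟩
    set α : ℝ := (inner ℝ u (y - c) : ℝ) with hα
    set β : ℝ := (inner ℝ w (y - c) : ℝ) with hβ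
    have hexp : α • u + β • w = y - c := by
      have h := b.sum_repr (y - c)
      rw [Fin.sum_univ_two, b.repr_apply_apply, b.repr_apply_apply, hb0, hb1] at h
      exact h
    have hy2 : y = c + α • u + β • w := by
      rw [add_assoc, hexp]; abel
    set μ0 : ℝ := 2 * α with hμ0
    set μp : ℝ := ((1 - 2 * α) * r + β) / (2 * r) with hμp
    set μn : ℝ := ((1 - 2 * α) * r - β) / (2 * r) with hμn
    have h2a : (1 - 2 * α) * r ≥ e := by
      have h' : 1 - 2 * α ≥ 1 / 2 - r := by rw [hadef] at hα2; linarith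
      calc e = (1 / 2 - r) * r := by rw [hedef]; ring
      _ ≤ (1 - 2 * α) * r := mul_le_mul_of_nonneg_right h' hrpos.le
    have hμ0n : 0 ≤ μ0 := by rw [hμ0]; linarith
    have hμpn : 0 ≤ μp := by rw [hμp]; apply div_nonneg; linarith; linarith
    have hμnn : 0 ≤ μn := by rw [hμn]; apply div_nonneg; linarith; linarith
    have hsum : μ0 + μp + μn = 1 := by
      rw [hμ0, hμp, hμn]; field_simp; ring
    have hcombo : y = μ0 • x' + μp • (c + r • w) + μn • (c - r • w) := by
      have hstep : μ0 • x' + μp • (c + r • w) + μn • (c - r • w)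
          = (μ0 + μp + μn) • c + (μ0 * 2⁻¹) • u + ((μp - μn) * r) • w := by
        rw [hx'def]
        module
      have h1 : μ0 * 2⁻¹ = α := by rw [hμ0]; ring
      have h2 : (μp - μn) * r = β := by
        rw [hμp, hμn]
        field_simp
        ring
      rw [hstep, hsum, h1, h2, one_smul, hy2]
    rw [hcombo]
    have h3 : ∑ i : Fin 3, ![μ0, μp, μn] i • ![x', c + r • w, c - r • w] i ∈ K := by
      apply hKconv.sum_mem
      · intro i _; fin_cases i <;> simpa
      · rw [Fin.sum_univ_three]; simpa using hsum
      · intro i _; fin_cases i <;> simpa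
    rw [Fin.sum_univ_three] at h3
    simpa using h3
  -- disjointness of the disk and the rectangle
  have hdisj : Disjoint (Metric.closedBall c r) R := by
    rw [Set.disjoint_left]
    intro y hy hyR
    obtain ⟨⟨hα1, _⟩, -⟩ := hyR
    have h1 : (inner ℝ u (y - c) : ℝ) ≤ ‖y - c‖ := by
      have h := real_inner_le_norm u (y - c)
      rwa [hu, one_mul] at h
    have h2 : ‖y - c‖ ≤ r := by rwa [Metric.mem_closedBall, dist_eq_norm] at hy
    linarith
  have hcont1 : Continuous fun y : EuclideanSpace ℝ (Fin 2) => (inner ℝ u (y - c) : ℝ) :=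
    continuous_const.inner (continuous_id.sub continuous_const)
  have hcont2 : Continuous fun y : EuclideanSpace ℝ (Fin 2) => (inner ℝ w (y - c) : ℝ) :=
    continuous_const.inner (continuous_id.sub continuous_const)
  have hRmeas : MeasurableSet R := by
    have hre : R = (fun y : EuclideanSpace ℝ (Fin 2) => (inner ℝ u (y - c) : ℝ)) ⁻¹' Ioc r a ∩
        (fun y : EuclideanSpace ℝ (Fin 2) => (inner ℝ w (y - c) : ℝ)) ⁻¹' Icc (-e) e := rfl
    rw [hre]
    exact (hcont1.measurable measurableSet_Ioc).inter (hcont2.measurable measurableSet_Icc)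
  -- volume of the rectangle
  have hboxmeas : MeasurableSet {z : EuclideanSpace ℝ (Fin 2) | z 0 ∈ Ioc r a ∧ z 1 ∈ Icc (-e) e} := by
    have hset : {z : EuclideanSpace ℝ (Fin 2) | z 0 ∈ Ioc r a ∧ z 1 ∈ Icc (-e) e}
        = (MeasurableEquiv.toLp 2 (Fin 2 → ℝ)).symm ⁻¹'
          (Set.univ.pi fun i : Fin 2 => if i = 0 then Ioc r a else Icc (-e) e) := by
      ext z
      simp [Set.mem_pi, Fin.forall_fin_two, MeasurableEquiv.toLp_symm_apply]
    rw [hset]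
    exact (MeasurableEquiv.toLp 2 (Fin 2 → ℝ)).symm.measurable
      (MeasurableSet.univ_pi fun i => by
        by_cases h : i = 0 <;> simp [h, measurableSet_Ioc, measurableSet_Icc])
  have hboxvol : volume {z : EuclideanSpace ℝ (Fin 2) | z 0 ∈ Ioc r a ∧ z 1 ∈ Icc (-e) e}
      = ENNReal.ofReal (a - r) * ENNReal.ofReal (e - -e) := by
    have hmp := EuclideanSpace.volume_preserving_symm_measurableEquiv_toLp (Fin 2)
    have hset : {z : EuclideanSpace ℝ (Fin 2) | z 0 ∈ Ioc r a ∧ z 1 ∈ Icc (-e) e}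
        = (MeasurableEquiv.toLp 2 (Fin 2 → ℝ)).symm ⁻¹'
          (Set.univ.pi fun i : Fin 2 => if i = 0 then Ioc r a else Icc (-e) e) := by
      ext z
      simp [Set.mem_pi, Fin.forall_fin_two, MeasurableEquiv.toLp_symm_apply]
    rw [hset, hmp.measure_preimage]
    · rw [volume_pi_pi, Fin.prod_univ_two]
      simp [Real.volume_Ioc, Real.volume_Icc]
    · refine (MeasurableSet.univ_pi fun i => ?_).nullMeasurableSet
      by_cases h : i = 0 <;> simp [h, measurableSet_Ioc, measurableSet_Icc]
  have hRvol : volume R = ENNReal.ofReal (a - r) * ENNReal.ofReal (e - -e) := by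
    have hmpT : MeasurePreserving (fun y : EuclideanSpace ℝ (Fin 2) => b.repr (y - c))
        volume volume :=
      b.measurePreserving_repr.comp (measurePreserving_sub_right volume c)
    have hbox : R = (fun y : EuclideanSpace ℝ (Fin 2) => b.repr (y - c)) ⁻¹'
        {z : EuclideanSpace ℝ (Fin 2) | z 0 ∈ Ioc r a ∧ z 1 ∈ Icc (-e) e} := by
      ext y
      simp only [hRdef, Set.mem_setOf_eq, Set.mem_preimage, b.repr_apply_apply, hb0, hb1]
    rw [hbox, hmpT.measure_preimage hboxmeas.nullMeasurableSet, hboxvol]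
  -- volume of the disk
  have hball : volume (Metric.closedBall c r) = ENNReal.ofReal (π * r ^ 2) := by
    rw [EuclideanSpace.volume_closedBall]
    simp only [Fintype.card_fin]
    rw [Real.sq_sqrt pi_nonneg]
    norm_num [Real.Gamma_two]
    rw [← ENNReal.ofReal_pow hrpos.le, ← ENNReal.ofReal_mul (by positivity)]
    ring_nf
  -- combine
  have hle : volume (Metric.closedBall c r) + volume R ≤ volume K := by
    rw [← measure_union hdisj hRmeas]
    exact measure_mono (Set.union_subset hballK hRK)
  refine lt_of_lt_of_le ?_ hle
  have har : (0:ℝ) < a - r := by rw [hadef]; linarith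
  have hee : (0:ℝ) < e - -e := by linarith [hepos]
  have hπr : (0:ℝ) < π * r ^ 2 := mul_pos pi_pos (pow_pos hrpos 2)
  rw [hball, hRvol, ← ENNReal.ofReal_mul har.le,
    ← ENNReal.ofReal_add hπr.le (mul_nonneg har.le hee.le)]
  rw [ENNReal.ofReal_lt_ofReal_iff (by nlinarith [mul_pos har hee])]
  have e3 : (a - r) * (e - -e) = r * (1 / 2 - r) ^ 2 := by rw [hadef, hedef]; ring
  rw [e3, hrdef]
  have key : 0.77056 * π ^ 3 < 2 * π ^ 2 + (π - 1) ^ 2 := by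
    nlinarith [sq_nonneg (π - 3.141592), sq_nonneg π]
  have hπ : (0:ℝ) < π := pi_pos
  have e1 : π * (1 / (2 * π)) ^ 2 = 1 / (4 * π) := by field_simp; ring
  have e2 : (1 / (2 * π)) * (1 / 2 - 1 / (2 * π)) ^ 2 = (π - 1) ^ 2 / (8 * π ^ 3) := by
    field_simp
    ring_nf
  rw [e1, e2]
  rw [div_add_div _ _ (by positivity) (by positivity), lt_div_iff₀ (by positivity)]
  nlinarith [pow_pos hπ 3, sq_nonneg π]
end
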